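/- Let x ∈ {0,1}^∞ satisfy limsup_{n→∞} Σ(x_1...x_n)/n³ > 0. Then there exist a prime binary word η and a nondecreasing sequence of nonnegative integers ℓ_1 ≤ ℓ_2 ≤ ... such that η^{ℓ_n} is a factor of x_1...x_n for all n and limsup_{n→∞} ℓ_n/n > 0. -/

import Mathlib

open Filter

/-- Number of occurrences of `ξ` as a factor of `w` (occurrence at position `i`
means `ξ = w_{i+1}...w_{i+|ξ|}`). -/
def occ (w ξ : List Bool) : ℕ :=
  ((List.range w.length).filter (fun i => ξ.isPrefixOf (w.drop i))).length

/-- `ℓ`-fold concatenation `η^ℓ` of the word `η`. -/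
def wpow (η : List Bool) (ℓ : ℕ) : List Bool := (List.replicate ℓ η).flatten

/-- The Kamae–Xue complexity `Σ(w) = Σ_{ξ ∈ {0,1}^+} |w|_ξ²`.  Since only
factors of `w` contribute nonzero terms, the sum is taken over the (finite) set
of nonempty sublists of `w`, which contains all factors of `w`. -/
def kxSum (w : List Bool) : ℕ :=
  ∑ ξ ∈ w.sublists.toFinset.filter (fun ξ => ξ ≠ []), (occ w ξ) ^ 2

/-- `Λ(w) = max{|η|²(ℓ+1)³ : η nonempty, ℓ ≥ 1, η^ℓ a factor of w}`. -/
noncomputable def Lam (w : List Bool) : ℕ :=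
  sSup {m | ∃ η ℓ, η ≠ ([] : List Bool) ∧ 1 ≤ ℓ ∧ wpow η ℓ <:+: w ∧
    m = η.length ^ 2 * (ℓ + 1) ^ 3}

/-- A nonempty word is prime (primitive) if it is not a proper power. -/
def IsPrimeWord (η : List Bool) : Prop :=
  η ≠ [] ∧ ∀ ζ ℓ, 2 ≤ ℓ → η ≠ wpow ζ ℓ

/-- `|v|_{ξ,m}`: occurrences of `ξ` in `v` ending in the last `m` positions. -/
def occEnd (v ξ : List Bool) (m : ℕ) : ℕ :=
  ((List.range v.length).filter
    (fun i => ξ.isPrefixOf (v.drop i) && decide (v.length < i + ξ.length + m))).length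

/-- The prefix `x_1 x_2 ⋯ x_n` of the infinite sequence `x`. -/
def pref (x : ℕ → Bool) (n : ℕ) : List Bool := (List.range n).map x

/-! If `Σ(w) > 2|w|³/a`, then some factor `ξ` of length `m ≥ |w|/a` occurs more than `m` times
in `w`, since otherwise `Σ(w) ≤ 2m|w|²`. Two of these occurrences lie less than `2a` apart, so `ξ`
has a period `g < 2a` and contains the power `u^⌊|ξ|/g⌋` of its prefix `u` of length `g`; writing
`u` as a power of a prime word gives a prime word of length `≤ 2a` with exponent `≥ |w|/(2a²)`.
For a suitable fixed `a` this applies to infinitely many prefixes of `x`, and there are only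
finitely many words of length `≤ 2a`, so a single prime word `η` works infinitely often; the
largest exponent `ℓₙ` with `η^ℓₙ` a factor of `x₁⋯xₙ` then has the required properties. -/

open Finset

theorem wpow_succ (η : List Bool) (ℓ : ℕ) : wpow η (ℓ + 1) = η ++ wpow η ℓ := by
  simp [wpow, List.replicate_succ]

theorem wpow_add (η : List Bool) (a b : ℕ) : wpow η (a + b) = wpow η a ++ wpow η b := by
  simp only [wpow, List.replicate_add, List.flatten_append]

theorem wpow_mul (η : List Bool) (a b : ℕ) : wpow (wpow η a) b = wpow η (a * b) := by
  induction b with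
  | zero => rfl
  | succ b ih => rw [wpow_succ, ih, Nat.mul_succ, add_comm, wpow_add]

theorem length_wpow (η : List Bool) (ℓ : ℕ) : (wpow η ℓ).length = ℓ * η.length := by
  simp [wpow, List.sum_replicate]

theorem exists_isPrimeWord_eq_wpow {u : List Bool} (hu : u ≠ []) :
    ∃ η r, IsPrimeWord η ∧ 0 < r ∧ u = wpow η r := by
  by_cases hP : IsPrimeWord u
  · exact ⟨u, 1, hP, one_pos, by simp [wpow]⟩
  obtain ⟨ζ, ℓ, hℓ, rfl⟩ : ∃ ζ ℓ, 2 ≤ ℓ ∧ u = wpow ζ ℓ := by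
    simpa [IsPrimeWord, hu] using hP
  have hζ : ζ ≠ [] := by rintro rfl; simp [wpow] at hu
  have hshorter : ζ.length < (wpow ζ ℓ).length := by
    rw [length_wpow]
    have := List.length_pos_iff.2 hζ
    nlinarith
  obtain ⟨η, r, hη, hr, rfl⟩ := exists_isPrimeWord_eq_wpow hζ
  exact ⟨η, r * ℓ, hη, by positivity, wpow_mul η r ℓ⟩
termination_by u.length

-- `ξ <+: u ++ ξ` says that `ξ` has period `|u|`.
theorem prefix_wpow_append_of_prefix_append {u ξ : List Bool} (h : ξ <+: u ++ ξ) :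
    ∀ k, ξ <+: wpow u k ++ ξ
  | 0 => List.prefix_refl ξ
  | k + 1 => by
    rw [wpow_succ, List.append_assoc]
    exact h.trans ((List.prefix_append_right_inj u).2 (prefix_wpow_append_of_prefix_append h k))

theorem wpow_prefix_of_prefix_append {u ξ : List Bool} (h : ξ <+: u ++ ξ) {k : ℕ}
    (hk : k * u.length ≤ ξ.length) : wpow u k <+: ξ :=
  List.prefix_of_prefix_length_le (List.prefix_append _ _)
    (prefix_wpow_append_of_prefix_append h k) (by rwa [length_wpow])

theorem prefix_take_append_of_prefix_drop {α : Type*} {w ξ : List α} {i j : ℕ} (hij : i ≤ j)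
    (hi : ξ <+: w.drop i) (hj : ξ <+: w.drop j) : ξ <+: (w.drop i).take (j - i) ++ ξ := by
  have hsplit : w.drop i = (w.drop i).take (j - i) ++ w.drop j := by
    conv_lhs => rw [← List.take_append_drop (j - i) (w.drop i)]
    rw [List.drop_drop, Nat.add_sub_cancel' hij]
  have hshift : (w.drop i).take (j - i) ++ ξ <+: w.drop i := by
    conv_rhs => rw [hsplit]
    exact (List.prefix_append_right_inj _).2 hj
  exact List.prefix_of_prefix_length_le hi hshift (by simp)

theorem Finset.exists_lt_lt_add_of_lt_card {S : Finset ℕ} {d k : ℕ} (hS : ∀ i ∈ S, i < d * k)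
    (hk : k < #S) : ∃ i ∈ S, ∃ j ∈ S, i < j ∧ j < i + d := by
  obtain ⟨i, hi, j, hj, hne, hdiv⟩ := exists_ne_map_eq_of_card_lt_of_maps_to (t := range k)
    (by simpa using hk) (f := (· / d)) fun i hi => by
      simpa using Nat.div_lt_of_lt_mul (hS i hi)
  have hd : 0 < d := Nat.pos_of_ne_zero fun hd => by simpa [hd] using hS i hi
  have hclose : ∀ i j, i / d = j / d → j < i + d := fun i j h =>
    calc j < j / d * d + d := Nat.lt_div_mul_add hd
      _ = i / d * d + d := by rw [h]
      _ ≤ i + d := Nat.add_le_add_right (Nat.div_mul_le_self i d) d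
  rcases hne.lt_or_gt with h | h
  · exact ⟨i, hi, j, hj, h, hclose i j hdiv⟩
  · exact ⟨j, hj, i, hi, h, hclose j i hdiv.symm⟩

theorem occ_eq_card (w ξ : List Bool) : occ w ξ = #{i ∈ range w.length | ξ <+: w.drop i} := by
  simp_rw [← List.isPrefixOf_iff_prefix]
  simp only [occ, Finset.card, Finset.filter_val, Finset.range_val, Multiset.range,
    Multiset.filter_coe, Multiset.coe_card, Bool.decide_eq_true]

theorem occ_le_length (w ξ : List Bool) : occ w ξ ≤ w.length :=
  (occ_eq_card w ξ).trans_le ((card_filter_le _ _).trans (card_range _).le)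

theorem card_filter_prefix_le {α : Type*} [DecidableEq α] {T : Finset (List α)} {m : ℕ}
    (hT : ∀ ξ ∈ T, ξ ≠ [] ∧ ξ.length ≤ m) (v : List α) : #{ξ ∈ T | ξ <+: v} ≤ m := by
  simpa using card_le_card_of_injOn List.length (t := Icc 1 m)
    (fun ξ hξ => by simpa [Nat.one_le_iff_ne_zero] using hT ξ (mem_filter.1 hξ).1)
    fun ξ₁ h₁ ξ₂ h₂ hlen =>
      (List.prefix_of_prefix_length_le (mem_filter.1 h₁).2 (mem_filter.1 h₂).2 hlen.le).eq_of_length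
        hlen

theorem sum_occ_le {T : Finset (List Bool)} {m : ℕ} (hT : ∀ ξ ∈ T, ξ ≠ [] ∧ ξ.length ≤ m)
    (w : List Bool) : ∑ ξ ∈ T, occ w ξ ≤ w.length * m :=
  calc ∑ ξ ∈ T, occ w ξ = ∑ i ∈ range w.length, #{ξ ∈ T | ξ <+: w.drop i} := by
        simp_rw [occ_eq_card, card_filter]
        exact sum_comm
    _ ≤ ∑ _i ∈ range w.length, m := sum_le_sum fun i _ => card_filter_prefix_le hT _
    _ = w.length * m := by simp

theorem kxSum_le_of_occ_le {w : List Bool} {m : ℕ} (h : ∀ ξ, m ≤ ξ.length → occ w ξ ≤ m) :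
    kxSum w ≤ 2 * m * w.length ^ 2 := by
  set n := w.length
  set S := w.sublists.toFinset.filter (fun ξ => ξ ≠ [])
  have hS : ∀ ξ ∈ S, ξ ≠ [] ∧ ξ.length ≤ n := fun ξ hξ => by
    simp only [S, mem_filter, List.mem_toFinset, List.mem_sublists] at hξ
    exact ⟨hξ.2, hξ.1.length_le⟩
  have hshort : ∑ ξ ∈ S with ξ.length < m, occ w ξ ^ 2 ≤ n * (n * m) :=
    calc ∑ ξ ∈ S with ξ.length < m, occ w ξ ^ 2
        ≤ ∑ ξ ∈ S with ξ.length < m, n * occ w ξ :=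
          sum_le_sum fun ξ _ => by rw [sq]; exact Nat.mul_le_mul_right _ (occ_le_length w ξ)
      _ ≤ n * (n * m) := by
          rw [← mul_sum]
          gcongr
          exact sum_occ_le (fun ξ hξ => ⟨(hS ξ (mem_filter.1 hξ).1).1, (mem_filter.1 hξ).2.le⟩) w
  have hlong : ∑ ξ ∈ S with ¬ ξ.length < m, occ w ξ ^ 2 ≤ m * (n * n) :=
    calc ∑ ξ ∈ S with ¬ ξ.length < m, occ w ξ ^ 2
        ≤ ∑ ξ ∈ S with ¬ ξ.length < m, m * occ w ξ :=
          sum_le_sum fun ξ hξ => by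
            rw [sq]; exact Nat.mul_le_mul_right _ (h ξ (not_lt.1 (mem_filter.1 hξ).2))
      _ ≤ m * (n * n) := by
          rw [← mul_sum]
          gcongr
          exact sum_occ_le (fun ξ hξ => hS ξ (mem_filter.1 hξ).1) w
  calc kxSum w = ∑ ξ ∈ S with ξ.length < m, occ w ξ ^ 2
        + ∑ ξ ∈ S with ¬ ξ.length < m, occ w ξ ^ 2 := (sum_filter_add_sum_filter_not _ _ _).symm
    _ ≤ n * (n * m) + m * (n * n) := add_le_add hshort hlong
    _ = 2 * m * n ^ 2 := by ring

theorem exists_long_factor_lt_occ {w : List Bool} {m : ℕ} (h : 2 * m * w.length ^ 2 < kxSum w) :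
    ∃ ξ, m ≤ ξ.length ∧ m < occ w ξ := by
  by_contra! hocc
  exact h.not_ge (kxSum_le_of_occ_le hocc)

theorem exists_prefix_append_of_lt_occ {w ξ : List Bool} {d k : ℕ} (hw : w.length ≤ d * k)
    (hk : k < occ w ξ) : ∃ u : List Bool, u ≠ [] ∧ u.length < d ∧ ξ <+: u ++ ξ ∧ ξ <:+: w := by
  rw [occ_eq_card] at hk
  obtain ⟨i, hi, j, hj, hij, hjd⟩ := exists_lt_lt_add_of_lt_card
    (fun i hi => (mem_range.1 (mem_filter.1 hi).1).trans_le hw) hk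
  simp only [mem_filter, mem_range] at hi hj
  have hlen : ((w.drop i).take (j - i)).length = j - i := by simp; omega
  refine ⟨(w.drop i).take (j - i), ?_, by omega, prefix_take_append_of_prefix_drop hij.le hi.2 hj.2,
    hi.2.isInfix.trans (List.drop_suffix i w).isInfix⟩
  rw [← List.length_pos_iff, hlen]
  omega

theorem exists_isPrimeWord_wpow_infix_of_kxSum {w : List Bool} {a : ℕ} (han : a ≤ w.length)
    (hkx : 2 * w.length ^ 3 < a * kxSum w) :
    ∃ η, IsPrimeWord η ∧ η.length ≤ 2 * a ∧
      ∃ ℓ, w.length / (2 * a ^ 2) ≤ ℓ ∧ wpow η ℓ <:+: w := by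
  set n := w.length
  have ha : 0 < a := Nat.pos_of_ne_zero fun ha => by simp [ha] at hkx
  set m := n / a
  have ham : a * m ≤ n := Nat.mul_div_le n a
  have hm : 0 < m := Nat.div_pos han ha
  obtain ⟨ξ, hξm, hocc⟩ := exists_long_factor_lt_occ (m := m) (w := w) <|
    Nat.lt_of_mul_lt_mul_left (a := a) <| calc
      a * (2 * m * n ^ 2) = 2 * (a * m) * n ^ 2 := by ring
      _ ≤ 2 * n * n ^ 2 := by gcongr
      _ = 2 * n ^ 3 := by ring
      _ < a * kxSum w := hkx
  have hn : n ≤ 2 * a * m := by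
    have : n < a * (m + 1) := Nat.lt_mul_div_succ n ha
    nlinarith
  obtain ⟨u, hu, hud, hper, hξw⟩ := exists_prefix_append_of_lt_occ hn hocc
  obtain ⟨η, r, hη, hr, rfl⟩ := exists_isPrimeWord_eq_wpow hu
  refine ⟨η, hη, ?_, r * (ξ.length / (wpow η r).length), ?_, ?_⟩
  · rw [length_wpow] at hud
    nlinarith
  · calc n / (2 * a ^ 2) = m / (2 * a) := by rw [Nat.div_div_eq_div_mul]; ring_nf
      _ ≤ ξ.length / (wpow η r).length :=
        Nat.div_le_div hξm hud.le (by simpa [List.length_eq_zero_iff] using hu)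
      _ ≤ _ := Nat.le_mul_of_pos_left _ hr
  · rw [← wpow_mul]
    exact (wpow_prefix_of_prefix_append hper (Nat.div_mul_le_self _ _)).isInfix.trans hξw

def maxPowExp (η w : List Bool) : ℕ := Nat.findGreatest (fun ℓ => wpow η ℓ <:+: w) w.length

theorem wpow_maxPowExp_infix (η w : List Bool) : wpow η (maxPowExp η w) <:+: w :=
  Nat.findGreatest_spec (P := fun ℓ => wpow η ℓ <:+: w) (Nat.zero_le _) List.nil_infix

theorem maxPowExp_le_length (η w : List Bool) : maxPowExp η w ≤ w.length :=
  Nat.findGreatest_le _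

theorem le_maxPowExp {η w : List Bool} {ℓ : ℕ} (hη : η ≠ []) (h : wpow η ℓ <:+: w) :
    ℓ ≤ maxPowExp η w := by
  refine Nat.le_findGreatest ?_ h
  calc ℓ ≤ ℓ * η.length := Nat.le_mul_of_pos_right ℓ (List.length_pos_iff.2 hη)
    _ = (wpow η ℓ).length := (length_wpow η ℓ).symm
    _ ≤ w.length := h.length_le

theorem maxPowExp_mono {η w w' : List Bool} (hη : η ≠ []) (h : w <:+: w') :
    maxPowExp η w ≤ maxPowExp η w' :=
  le_maxPowExp hη ((wpow_maxPowExp_infix η w).trans h)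

theorem length_pref (x : ℕ → Bool) (n : ℕ) : (pref x n).length = n := by simp [pref]

theorem pref_prefix_pref (x : ℕ → Bool) {n n' : ℕ} (h : n ≤ n') : pref x n <+: pref x n' := by
  simpa [pref, List.take_range, min_eq_left h] using (List.take_prefix n (List.range n')).map x

theorem exists_nat_frequently_lt_mul_of_limsup_pos {ι : Type*} {l : Filter ι} [l.NeBot]
    {u : ι → ℝ} (hu : ∀ i, 0 ≤ u i) (h : 0 < l.limsup u) (c : ℝ) :
    ∃ a : ℕ, ∃ᶠ i in l, c < a * u i := by
  have hfreq : ∃ᶠ i in l, l.limsup u / 2 < u i :=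
    frequently_lt_of_lt_limsup (isCoboundedUnder_le_of_le l hu) (by linarith)
  obtain ⟨a, ha⟩ := exists_nat_gt (c / (l.limsup u / 2))
  refine ⟨a, hfreq.mono fun i hi => ?_⟩
  rw [div_lt_iff₀ (by positivity)] at ha
  exact ha.trans_le (by gcongr)

theorem limsup_div_pos_of_frequently_le_mul {f : ℕ → ℕ} (hf : ∀ n, f n ≤ n) {C : ℕ}
    (h : ∃ᶠ n in atTop, n ≤ C * f n) : 0 < atTop.limsup (fun n => (f n : ℝ) / n) := by
  have h' := h.and_eventually (eventually_gt_atTop 0)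
  obtain ⟨n, hn, hn0⟩ := h'.exists
  have hC : 0 < C := Nat.pos_of_ne_zero fun hC => by simp [hC] at hn; omega
  have hbdd : IsBoundedUnder (· ≤ ·) atTop fun n => (f n : ℝ) / n :=
    isBoundedUnder_of ⟨1, fun n => div_le_one_of_le₀ (by exact_mod_cast hf n) (by positivity)⟩
  refine (by positivity : (0 : ℝ) < 1 / C).trans_le (le_limsup_of_frequently_le ?_ hbdd)
  refine h'.mono fun n ⟨hn, hn0⟩ => ?_
  rw [div_le_div_iff₀ (by positivity) (by positivity), one_mul]
  exact_mod_cast (by linarith : n ≤ f n * C)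

theorem le_two_mul_mul_div {n B : ℕ} (hB : 0 < B) (h : B ≤ n) : n ≤ 2 * B * (n / B) := by
  have := Nat.lt_mul_div_succ n hB
  have := Nat.div_pos h hB
  nlinarith

theorem frequently_exists_isPrimeWord_wpow_infix_pref (x : ℕ → Bool) {a : ℕ}
    (ha : ∃ᶠ n in atTop, 2 < a * ((kxSum (pref x n) : ℝ) / (n : ℝ) ^ 3)) :
    ∃ᶠ n in atTop, ∃ η ∈ {η : List Bool | η.length ≤ 2 * a}, IsPrimeWord η ∧
      ∃ ℓ, n / (2 * a ^ 2) ≤ ℓ ∧ wpow η ℓ <:+: pref x n := by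
  refine (ha.and_eventually (eventually_ge_atTop a)).mono fun n ⟨hn, han⟩ => ?_
  have hn0 : (0 : ℝ) < n := by
    refine Nat.cast_pos.2 (Nat.pos_of_ne_zero fun hn0 => ?_)
    norm_num [hn0] at hn
  rw [mul_div_assoc', lt_div_iff₀ (by positivity)] at hn
  obtain ⟨η, hη, hηa, ℓ, hℓ, hinf⟩ :=
    exists_isPrimeWord_wpow_infix_of_kxSum (w := pref x n) (a := a)
      (by rwa [length_pref]) (by rw [length_pref]; exact_mod_cast hn)
  rw [length_pref] at hℓ
  exact ⟨η, hηa, hη, ℓ, hℓ, hinf⟩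

/-- if `limsup Σ(x_1...x_n)/n³ > 0`, then there are a prime word
`η` and nondecreasing nonnegative integers `ℓ_1 ≤ ℓ_2 ≤ ⋯` with
`η^{ℓ_n} ≺ x_1...x_n` and `limsup ℓ_n/n > 0`. -/
theorem exists_prime_pow_factor (x : ℕ → Bool)
    (h : 0 < atTop.limsup (fun n => (kxSum (pref x n) : ℝ) / (n : ℝ) ^ 3)) :
    ∃ η : List Bool, IsPrimeWord η ∧ ∃ ℓ : ℕ → ℕ, Monotone ℓ ∧
      (∀ n, wpow η (ℓ n) <:+: pref x n) ∧
      0 < atTop.limsup (fun n => (ℓ n : ℝ) / (n : ℝ)) := by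
  obtain ⟨a, ha⟩ := exists_nat_frequently_lt_mul_of_limsup_pos (fun n => by positivity) h 2
  obtain ⟨η, hηa, hη⟩ := (List.finite_length_le Bool (2 * a)).frequently_exists.1
    (frequently_exists_isPrimeWord_wpow_infix_pref x ha)
  obtain ⟨-, hprime, -⟩ := hη.exists
  have ha0 : 0 < a := by
    have : η.length ≤ 2 * a := hηa
    have := List.length_pos_iff.2 hprime.1
    omega
  refine ⟨η, hprime, fun n => maxPowExp η (pref x n),
    fun n n' hn => maxPowExp_mono hprime.1 (pref_prefix_pref x hn).isInfix,
    fun n => wpow_maxPowExp_infix η _, ?_⟩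
  refine limsup_div_pos_of_frequently_le_mul (C := 2 * (2 * a ^ 2))
    (fun n => by simpa only [length_pref] using maxPowExp_le_length η (pref x n)) ?_
  refine (hη.and_eventually (eventually_ge_atTop (2 * a ^ 2))).mono
    fun n ⟨⟨_, ℓ, hℓ, hinf⟩, hn⟩ => ?_
  calc n ≤ 2 * (2 * a ^ 2) * (n / (2 * a ^ 2)) := le_two_mul_mul_div (by positivity) hn
    _ ≤ 2 * (2 * a ^ 2) * maxPowExp η (pref x n) := by
        gcongr
        exact hℓ.trans (le_maxPowExp hprime.1 hinf)
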